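/- Let 2l < a < 2l+1, l ∈ ℕ, let μ₁ < … < μ_{l+1} = π/2 be the first l+1 positive solutions of μ·tan(μa) = (π/2)·tan(πa/2), and let f_j(x) = cos(μ_j x). Then any linear combination f = Σ_j α_j f_j satisfies ∫₀^a f'(x)² dx − (π²/4)·∫₀^a f(x)² dx + (√(M(a))/2)·f(a)² ≤ 0, where M(a) = π²·tan²(πa/2). -/

import Mathlib

/-!
Each `f_j = cos (μ_j ·)` solves `-f'' = μ_j² f` with `f'(0) = 0` and the Robin condition
`f'(a) = -s f(a)`, i.e. `μ_j sin (μ_j a) = s cos (μ_j a)`, where `s = (π/2) tan (πa/2) > 0`.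
Integration by parts gives `∫ f_j' f_k' + s f_j(a) f_k(a) = μ_j² ∫ f_j f_k`. The left side is
symmetric in `j, k`, so the `f_j` are `L²`-orthogonal, and the quadratic form of `Σ α_j f_j`
collapses to `Σ α_j² (μ_j² - π²/4) ∫ f_j² ≤ 0`.
-/

open Real intervalIntegral

lemma hasDerivAt_cos_mul (μ x : ℝ) : HasDerivAt (fun x => cos (μ * x)) (-(μ * sin (μ * x))) x :=
  (((hasDerivAt_id' x).const_mul μ).cos).congr_deriv (by ring)

lemma hasDerivAt_mul_sin_mul (μ x : ℝ) :
    HasDerivAt (fun x => μ * sin (μ * x)) (μ ^ 2 * cos (μ * x)) x :=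
  ((((hasDerivAt_id' x).const_mul μ).sin).const_mul μ).congr_deriv (by ring)

lemma integral_sin_mul_sin_add_of_robin {μ ν a s : ℝ} (hμ : μ * sin (μ * a) = s * cos (μ * a)) :
    (∫ x in (0 : ℝ)..a, μ * sin (μ * x) * (ν * sin (ν * x))) + s * cos (μ * a) * cos (ν * a)
      = μ ^ 2 * ∫ x in (0 : ℝ)..a, cos (μ * x) * cos (ν * x) := by
  have hparts := integral_mul_deriv_eq_deriv_mul (a := 0) (b := a)
    (fun x _ => hasDerivAt_cos_mul ν x) (fun x _ => hasDerivAt_mul_sin_mul μ x)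
    ((by fun_prop : Continuous fun x => -(ν * sin (ν * x))).intervalIntegrable _ _)
    ((by fun_prop : Continuous fun x => μ ^ 2 * cos (μ * x)).intervalIntegrable _ _)
  simp only [mul_zero, sin_zero, hμ, integral_neg, neg_mul] at hparts
  rw [← integral_const_mul]
  simp only [mul_left_comm (μ ^ 2), mul_comm (cos (μ * _)), mul_comm (μ * sin (μ * _))] at hparts ⊢
  linarith

lemma integral_cos_mul_cos_eq_zero_of_robin {μ ν a s : ℝ}
    (hμ : μ * sin (μ * a) = s * cos (μ * a)) (hν : ν * sin (ν * a) = s * cos (ν * a))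
    (hne : μ ^ 2 ≠ ν ^ 2) :
    ∫ x in (0 : ℝ)..a, cos (μ * x) * cos (ν * x) = 0 := by
  have hμν := integral_sin_mul_sin_add_of_robin (ν := ν) hμ
  have hνμ := integral_sin_mul_sin_add_of_robin (ν := μ) hν
  simp only [mul_comm (ν * sin (ν * _)), mul_comm (cos (ν * _))] at hνμ
  have : (μ ^ 2 - ν ^ 2) * ∫ x in (0 : ℝ)..a, cos (μ * x) * cos (ν * x) = 0 := by linarith
  exact (mul_eq_zero.mp this).resolve_left (sub_ne_zero.mpr hne)

section

variable {ι : Type*} [Fintype ι]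

lemma sum_mul_sq (α v : ι → ℝ) :
    (∑ j, α j * v j) ^ 2 = ∑ j, ∑ k, α j * α k * (v j * v k) := by
  rw [sq, Finset.sum_mul_sum]
  exact Finset.sum_congr rfl fun j _ => Finset.sum_congr rfl fun k _ => by ring

lemma integral_sum_mul_sq (α : ι → ℝ) {g : ι → ℝ → ℝ} (hg : ∀ j, Continuous (g j)) (a b : ℝ) :
    ∫ x in a..b, (∑ j, α j * g j x) ^ 2 = ∑ j, ∑ k, α j * α k * ∫ x in a..b, g j x * g k x := by
  simp only [sum_mul_sq]
  rw [integral_finsetSum fun j _ =>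
    (by fun_prop : Continuous fun x => ∑ k, α j * α k * (g j x * g k x)).intervalIntegrable _ _]
  refine Finset.sum_congr rfl fun j _ => ?_
  rw [integral_finsetSum fun k _ =>
    (by fun_prop : Continuous fun x => α j * α k * (g j x * g k x)).intervalIntegrable _ _]
  simp only [integral_const_mul]

lemma hasDerivAt_sum_cos_mul (α μ : ι → ℝ) (x : ℝ) :
    HasDerivAt (fun x => ∑ j, α j * cos (μ j * x)) (-∑ j, α j * (μ j * sin (μ j * x))) x := by
  rw [← Finset.sum_neg_distrib]
  exact HasDerivAt.fun_sum fun j _ =>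
    ((hasDerivAt_cos_mul (μ j) x).const_mul (α j)).congr_deriv (by ring)

theorem integral_deriv_sq_sub_add_robin_nonpos {a s c : ℝ} (ha : 0 ≤ a) {μ : ι → ℝ}
    (hμ : Function.Injective fun j => μ j ^ 2)
    (hrobin : ∀ j, μ j * sin (μ j * a) = s * cos (μ j * a)) (hc : ∀ j, μ j ^ 2 ≤ c) (α : ι → ℝ) :
    (∫ x in (0 : ℝ)..a, deriv (fun x => ∑ j, α j * cos (μ j * x)) x ^ 2)
      - c * (∫ x in (0 : ℝ)..a, (∑ j, α j * cos (μ j * x)) ^ 2)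
      + s * (∑ j, α j * cos (μ j * a)) ^ 2 ≤ 0 := by
  have hderiv : ∀ x, deriv (fun x => ∑ j, α j * cos (μ j * x)) x ^ 2
      = (∑ j, α j * (μ j * sin (μ j * x))) ^ 2 := fun x => by
    rw [(hasDerivAt_sum_cos_mul α μ x).deriv, neg_sq]
  simp only [hderiv]
  rw [integral_sum_mul_sq α (g := fun j x => μ j * sin (μ j * x)) (fun j => by fun_prop),
    integral_sum_mul_sq α (g := fun j x => cos (μ j * x)) (fun j => by fun_prop), sum_mul_sq]
  calc _ = ∑ j, ∑ k,
        α j * α k * ((μ j ^ 2 - c) * ∫ x in (0 : ℝ)..a, cos (μ j * x) * cos (μ k * x)) := by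
        simp only [Finset.mul_sum, ← Finset.sum_sub_distrib, ← Finset.sum_add_distrib]
        refine Finset.sum_congr rfl fun j _ => Finset.sum_congr rfl fun k _ => ?_
        linear_combination (α j * α k) * integral_sin_mul_sin_add_of_robin (ν := μ k) (hrobin j)
    _ = ∑ j, α j * α j * ((μ j ^ 2 - c) * ∫ x in (0 : ℝ)..a, cos (μ j * x) * cos (μ j * x)) :=
        Finset.sum_congr rfl fun j _ => Finset.sum_eq_single j (fun k _ hkj => by
          rw [integral_cos_mul_cos_eq_zero_of_robin (hrobin j) (hrobin k) (hμ.ne hkj.symm)]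
          ring) (by simp)
    _ ≤ 0 := Finset.sum_nonpos fun j _ => mul_nonpos_of_nonneg_of_nonpos (mul_self_nonneg _)
        (mul_nonpos_of_nonpos_of_nonneg (sub_nonpos.mpr (hc j))
          (integral_nonneg ha fun x _ => mul_self_nonneg _))

end

lemma tan_pi_mul_div_two_pos {l : ℕ} {a : ℝ} (ha : 2 * (l : ℝ) < a) (ha' : a < 2 * l + 1) :
    0 < tan (π * a / 2) := by
  rw [← tan_periodic.sub_nat_mul_eq l]
  apply tan_pos_of_pos_of_lt_pi_div_two <;> nlinarith [pi_pos]

lemma mul_sin_eq_of_mul_tan_eq {μ a s : ℝ} (hs : s ≠ 0) (h : μ * tan (μ * a) = s) :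
    μ * sin (μ * a) = s * cos (μ * a) := by
  have hcos : cos (μ * a) ≠ 0 := fun h0 =>
    hs (by rw [← h, tan_eq_sin_div_cos, h0, div_zero, mul_zero])
  rw [← h, tan_eq_sin_div_cos]
  field_simp

theorem stmt14_general (l : ℕ) (a : ℝ) (ha : 2 * (l:ℝ) < a) (ha' : a < 2 * (l:ℝ) + 1)
    (μ : Fin (l + 1) → ℝ) (hmono : StrictMono μ)
    (hpos : ∀ j, 0 < μ j)
    (hsol : ∀ j, μ j * Real.tan (μ j * a) = (π / 2) * Real.tan (π * a / 2))
    (hlast : μ (Fin.last l) = π / 2)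
    (α : Fin (l + 1) → ℝ) :
    (∫ x in (0:ℝ)..a,
        deriv (fun x => ∑ j, α j * Real.cos (μ j * x)) x ^ 2)
      - (π ^ 2 / 4) * (∫ x in (0:ℝ)..a, (∑ j, α j * Real.cos (μ j * x)) ^ 2)
      + (Real.sqrt (π ^ 2 * Real.tan (π * a / 2) ^ 2) / 2)
          * (∑ j, α j * Real.cos (μ j * a)) ^ 2 ≤ 0 := by
  have htan := tan_pi_mul_div_two_pos ha ha'
  have hsqrt : √(π ^ 2 * tan (π * a / 2) ^ 2) / 2 = π / 2 * tan (π * a / 2) := by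
    rw [← mul_pow, sqrt_sq (by positivity)]
    ring
  rw [hsqrt]
  have ha0 : 0 ≤ a := (by positivity : (0 : ℝ) ≤ 2 * l).trans ha.le
  refine integral_deriv_sq_sub_add_robin_nonpos ha0 (fun j k hjk => hmono.injective ?_)
    (fun j => mul_sin_eq_of_mul_tan_eq (by positivity) (hsol j)) (fun j => ?_) α
  · exact (pow_left_inj₀ (hpos j).le (hpos k).le two_ne_zero).mp hjk
  · have hle : μ j ≤ π / 2 := hlast ▸ hmono.monotone (Fin.le_last j)
    nlinarith [hpos j]

theorem stmt14 (l : ℕ) (a : ℝ) (ha : 2 * (l:ℝ) < a) (ha' : a < 2 * (l:ℝ) + 1)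
    (μ : Fin (l + 1) → ℝ) (hmono : StrictMono μ)
    (hpos : ∀ j, 0 < μ j)
    (hsol : ∀ j, μ j * Real.tan (μ j * a) = (π / 2) * Real.tan (π * a / 2))
    (hlast : μ (Fin.last l) = π / 2)
    (hfirst : ∀ ν : ℝ, 0 < ν → ν < π / 2 →
        ν * Real.tan (ν * a) = (π / 2) * Real.tan (π * a / 2) → ∃ j, μ j = ν)
    (α : Fin (l + 1) → ℝ) :
    (∫ x in (0:ℝ)..a,
        deriv (fun x => ∑ j, α j * Real.cos (μ j * x)) x ^ 2)
      - (π ^ 2 / 4) * (∫ x in (0:ℝ)..a, (∑ j, α j * Real.cos (μ j * x)) ^ 2)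
      + (Real.sqrt (π ^ 2 * Real.tan (π * a / 2) ^ 2) / 2)
          * (∑ j, α j * Real.cos (μ j * a)) ^ 2 ≤ 0 :=
  stmt14_general l a ha ha' μ hmono hpos hsol hlast α
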